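/- Let p ∈ (1,2) and μ₀ > 0. Define F₁ : ℝ^(3×3) → ℝ^(3×3) by F₁(λ) = μ₀ |λ|^(p-2) λ for λ ≠ 0 and F₁(0) = 0, where |λ| is the Frobenius norm and juxtaposition is scalar multiplication. Then for all λ, λ' ∈ ℝ^(3×3), (|λ| + |λ'|)^(2-p) · ⟪F₁(λ) - F₁(λ'), λ - λ'⟫ ≥ μ₀ (p-1) |λ - λ'|², where ⟪·,·⟫ is the Frobenius inner product. -/

import Mathlib

open Finset


/-- Frobenius norm of a 3×3 real matrix. -/
noncomputable def fnorm (A : Matrix (Fin 3) (Fin 3) ℝ) : ℝ :=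
  Real.sqrt (∑ i, ∑ j, (A i j) ^ 2)

/-- Frobenius inner product of 3×3 real matrices. -/
noncomputable def finner (A B : Matrix (Fin 3) (Fin 3) ℝ) : ℝ :=
  ∑ i, ∑ j, A i j * B i j

abbrev M3 := Matrix (Fin 3) (Fin 3) ℝ

lemma fnorm_nonneg (A : M3) : 0 ≤ fnorm A := Real.sqrt_nonneg _

lemma sq_fnorm (A : M3) : fnorm A ^ 2 = ∑ i, ∑ j, (A i j) ^ 2 :=
  Real.sq_sqrt (by positivity)

lemma finner_self (A : M3) : finner A A = fnorm A ^ 2 := by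
  rw [sq_fnorm]; simp [finner, sq]

lemma finner_comm (A B : M3) : finner A B = finner B A := by
  simp [finner, mul_comm]

lemma finner_sub_left (A B C : M3) : finner (A - B) C = finner A C - finner B C := by
  simp [finner, Matrix.sub_apply, sub_mul, Finset.sum_sub_distrib]

lemma finner_sub_right (A B C : M3) : finner A (B - C) = finner A B - finner A C := by
  simp [finner, Matrix.sub_apply, mul_sub, Finset.sum_sub_distrib]

lemma finner_neg_neg (A B : M3) : finner (-A) (-B) = finner A B := by
  simp [finner]

lemma finner_smul_left (c : ℝ) (A B : M3) : finner (c • A) B = c * finner A B := by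
  simp [finner, Matrix.smul_apply, smul_eq_mul, Finset.mul_sum, mul_assoc]

lemma fnorm_pos {A : M3} (h : A ≠ 0) : 0 < fnorm A := by
  rcases (fnorm_nonneg A).lt_or_eq with h' | h'
  · exact h'
  exfalso; apply h
  have h0 : ∑ i, ∑ j, (A i j) ^ 2 = 0 := by
    have := sq_fnorm A; rw [← h'] at this; simpa using this.symm
  ext i j
  have hi := (Finset.sum_eq_zero_iff_of_nonneg (fun i _ => by positivity)).1 h0 i (mem_univ i)
  have hj := (Finset.sum_eq_zero_iff_of_nonneg (fun j _ => by positivity)).1 hi j (mem_univ j)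
  simpa using pow_eq_zero_iff (n := 2) (by norm_num) |>.1 hj

lemma abs_finner_le (A B : M3) : |finner A B| ≤ fnorm A * fnorm B := by
  have h := Finset.sum_mul_sq_le_sq_mul_sq Finset.univ
    (fun q : Fin 3 × Fin 3 => A q.1 q.2) (fun q : Fin 3 × Fin 3 => B q.1 q.2)
  have h1 : finner A B = ∑ q : Fin 3 × Fin 3, A q.1 q.2 * B q.1 q.2 := by
    rw [Fintype.sum_prod_type]; rfl
  have h2 : fnorm A ^ 2 = ∑ q : Fin 3 × Fin 3, (A q.1 q.2) ^ 2 := by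
    rw [sq_fnorm, Fintype.sum_prod_type]
  have h3 : fnorm B ^ 2 = ∑ q : Fin 3 × Fin 3, (B q.1 q.2) ^ 2 := by
    rw [sq_fnorm, Fintype.sum_prod_type]
  have key : (finner A B) ^ 2 ≤ (fnorm A * fnorm B) ^ 2 := by
    rw [h1, mul_pow, h2, h3]; exact h
  have h4 := Real.sqrt_le_sqrt key
  rwa [Real.sqrt_sq_eq_abs, Real.sqrt_sq (mul_nonneg (fnorm_nonneg A) (fnorm_nonneg B))] at h4

lemma subadd {a b q : ℝ} (ha : 0 ≤ a) (hb : 0 ≤ b) (hq0 : 0 ≤ q) (hq1 : q ≤ 1) :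
    (a + b) ^ q ≤ a ^ q + b ^ q := by
  have h := NNReal.rpow_add_le_add_rpow a.toNNReal b.toNNReal hq0 hq1
  have h2 := NNReal.coe_le_coe.2 h
  rw [NNReal.coe_add, NNReal.coe_rpow, NNReal.coe_rpow, NNReal.coe_rpow, NNReal.coe_add,
    Real.coe_toNNReal a ha, Real.coe_toNNReal b hb] at h2
  exact h2

lemma concave_key {a b q : ℝ} (hb : 0 ≤ b) (hab : b ≤ a) (ha : 0 < a)
    (hq0 : 0 ≤ q) (hq1 : q ≤ 1) : q * a ^ (q - 1) * (a - b) ≤ a ^ q - b ^ q := by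
  have ht : (0:ℝ) ≤ b / a := by positivity
  have hbern : (b / a) ^ q ≤ 1 + q * (b / a - 1) := by
    have := rpow_one_add_le_one_add_mul_self (s := b / a - 1) (by linarith) hq0 hq1
    simpa using this
  have hdiv : (b / a) ^ q = b ^ q / a ^ q := Real.div_rpow hb ha.le q
  have haq : 0 < a ^ q := Real.rpow_pos_of_pos ha q
  have hmul : b ^ q ≤ a ^ q * (1 + q * (b / a - 1)) := by
    rw [hdiv] at hbern
    calc b ^ q = a ^ q * (b ^ q / a ^ q) := by field_simp
      _ ≤ a ^ q * (1 + q * (b / a - 1)) := by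
          exact mul_le_mul_of_nonneg_left hbern haq.le
  have hq' : a ^ q = a ^ (q - 1) * a := by
    rw [← Real.rpow_add_one ha.ne' (q - 1)]; ring_nf
  have : a ^ q * (b / a - 1) = a ^ (q - 1) * (b - a) := by
    rw [hq']; field_simp
  nlinarith [this, hmul]

lemma affine_step {cp ap2 bp2 a b s p : ℝ} (hab : 0 < a * b)
    (hs1 : s ≤ a * b) (hs2 : -(a * b) ≤ s)
    (hEp : cp * (ap2 * (a ^ 2 + a * b) + bp2 * (b ^ 2 + a * b))
      ≥ (p - 1) * (a ^ 2 + b ^ 2 + 2 * (a * b)))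
    (hGab : cp * (ap2 * (a ^ 2 - a * b) + bp2 * (b ^ 2 - a * b))
      ≥ (p - 1) * (a ^ 2 + b ^ 2 - 2 * (a * b))) :
    cp * (ap2 * (a ^ 2 - s) + bp2 * (b ^ 2 - s)) ≥ (p - 1) * (a ^ 2 + b ^ 2 - 2 * s) := by
  set e1 := cp * (ap2 * (a ^ 2 + a * b) + bp2 * (b ^ 2 + a * b))
    - (p - 1) * (a ^ 2 + b ^ 2 + 2 * (a * b)) with he1
  set e2 := cp * (ap2 * (a ^ 2 - a * b) + bp2 * (b ^ 2 - a * b))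
    - (p - 1) * (a ^ 2 + b ^ 2 - 2 * (a * b)) with he2
  have h1 : 0 ≤ (a * b - s) * e1 := mul_nonneg (by linarith) (by rw [he1]; linarith)
  have h2 : 0 ≤ (a * b + s) * e2 := mul_nonneg (by linarith) (by rw [he2]; linarith)
  rw [ge_iff_le, ← sub_nonneg]
  have hiden : (2 * (a * b)) * ((cp * (ap2 * (a ^ 2 - s) + bp2 * (b ^ 2 - s)))
      - (p - 1) * (a ^ 2 + b ^ 2 - 2 * s)) = (a * b - s) * e1 + (a * b + s) * e2 := by
    rw [he1, he2]; ring
  by_contra hcon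
  push_neg at hcon
  have hneg : (2 * (a * b)) * ((cp * (ap2 * (a ^ 2 - s) + bp2 * (b ^ 2 - s)))
      - (p - 1) * (a ^ 2 + b ^ 2 - 2 * s)) < 0 :=
    mul_neg_of_pos_of_neg (by linarith) (by linarith)
  rw [hiden] at hneg
  linarith

lemma key_scalar {p a b s : ℝ} (hp1 : 1 < p) (hp2 : p < 2) (ha : 0 < a) (hb : 0 < b)
    (hs1 : s ≤ a * b) (hs2 : -(a * b) ≤ s) :
    (a + b) ^ (2 - p) * (a ^ (p - 2) * (a ^ 2 - s) + b ^ (p - 2) * (b ^ 2 - s))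
      ≥ (p - 1) * (a ^ 2 + b ^ 2 - 2 * s) := by
  have hc : 0 < a + b := by linarith
  -- rpow bookkeeping
  have haP : a ^ (p - 2) * a ^ 2 = a ^ (p - 1) * a := by
    rw [pow_two, ← mul_assoc, ← Real.rpow_add_one ha.ne' (p - 2)]; ring_nf
  have hbP : b ^ (p - 2) * b ^ 2 = b ^ (p - 1) * b := by
    rw [pow_two, ← mul_assoc, ← Real.rpow_add_one hb.ne' (p - 2)]; ring_nf
  have haQ : a ^ (p - 2) * a = a ^ (p - 1) := by
    rw [← Real.rpow_add_one ha.ne' (p - 2)]; ring_nf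
  have hbQ : b ^ (p - 2) * b = b ^ (p - 1) := by
    rw [← Real.rpow_add_one hb.ne' (p - 2)]; ring_nf
  set c := a + b with hcdef
  have hc2 : (c:ℝ) ^ 2 = c ^ (2 - p) * c * c ^ (p - 1) := by
    rw [← Real.rpow_add_one hc.ne' (2 - p), ← Real.rpow_add hc, ← Real.rpow_two]
    norm_num
  have hcpos : 0 < c ^ (2 - p) := Real.rpow_pos_of_pos hc _
  have haq : 0 < a ^ (p - 1) := Real.rpow_pos_of_pos ha _
  have hbq : 0 < b ^ (p - 1) := Real.rpow_pos_of_pos hb _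
  -- endpoint s = -ab
  have hEp : c ^ (2 - p) * (a ^ (p - 2) * (a ^ 2 + a * b) + b ^ (p - 2) * (b ^ 2 + a * b))
      ≥ (p - 1) * (a ^ 2 + b ^ 2 + 2 * (a * b)) := by
    have hsub : c ^ (p - 1) ≤ a ^ (p - 1) + b ^ (p - 1) :=
      subadd ha.le hb.le (by linarith) (by linarith)
    have h1 : a ^ (p - 2) * (a ^ 2 + a * b) = a ^ (p - 1) * c := by
      rw [mul_add, haP]; rw [show a ^ (p-2) * (a * b) = (a ^ (p-2) * a) * b by ring, haQ]
      rw [hcdef]; ring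
    have h2 : b ^ (p - 2) * (b ^ 2 + a * b) = b ^ (p - 1) * c := by
      rw [mul_add, hbP]; rw [show b ^ (p-2) * (a * b) = (b ^ (p-2) * b) * a by ring, hbQ]
      rw [hcdef]; ring
    have h3 : (a:ℝ) ^ 2 + b ^ 2 + 2 * (a * b) = c ^ 2 := by rw [hcdef]; ring
    rw [h1, h2, h3, hc2]
    have : (p - 1) * c ^ (p - 1) ≤ a ^ (p - 1) + b ^ (p - 1) := by
      nlinarith [Real.rpow_pos_of_pos hc (p - 1)]
    nlinarith [mul_pos hcpos hc]
  -- endpoint s = ab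
  have hEm : ∀ x y : ℝ, 0 < x → 0 < y → y ≤ x →
      (x + y) ^ (2 - p) * (x ^ (p - 1) - y ^ (p - 1)) * (x - y) ≥ (p - 1) * (x - y) ^ 2 := by
    intro x y hx hy hyx
    have hck : (p - 1) * x ^ (p - 2) * (x - y) ≤ x ^ (p - 1) - y ^ (p - 1) := by
      have h := concave_key (q := p - 1) hy.le hyx hx (by linarith) (by linarith)
      rwa [show p - 1 - 1 = p - 2 by ring] at h
    have hxy : (0:ℝ) ≤ x - y := by linarith
    have hcp : 0 < (x + y) ^ (2 - p) := Real.rpow_pos_of_pos (by linarith) _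
    have hxp : 0 < x ^ (p - 2) := Real.rpow_pos_of_pos hx _
    have key2 : 1 ≤ (x + y) ^ (2 - p) * x ^ (p - 2) := by
      have h1 : x ^ (2 - p) ≤ (x + y) ^ (2 - p) :=
        Real.rpow_le_rpow hx.le (by linarith) (by linarith)
      have h2 : x ^ (2 - p) * x ^ (p - 2) = 1 := by
        rw [← Real.rpow_add hx]; norm_num
      nlinarith
    have t1 : (x + y) ^ (2 - p) * ((p - 1) * x ^ (p - 2) * (x - y)) * (x - y)
        ≤ (x + y) ^ (2 - p) * (x ^ (p - 1) - y ^ (p - 1)) * (x - y) := by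
      nlinarith [mul_nonneg (mul_nonneg hcp.le hxy) (sub_nonneg.2 hck)]
    have t2 : (p - 1) * (x - y) ^ 2
        ≤ (x + y) ^ (2 - p) * ((p - 1) * x ^ (p - 2) * (x - y)) * (x - y) := by
      have hnn : 0 ≤ (p - 1) * (x - y) ^ 2 := mul_nonneg (by linarith) (sq_nonneg _)
      calc (p - 1) * (x - y) ^ 2
          ≤ ((x + y) ^ (2 - p) * x ^ (p - 2)) * ((p - 1) * (x - y) ^ 2) :=
            le_mul_of_one_le_left hnn key2
        _ = (x + y) ^ (2 - p) * ((p - 1) * x ^ (p - 2) * (x - y)) * (x - y) := by ring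
    linarith
  -- combine endpoints (value at s = a*b)
  have hGab : c ^ (2 - p) * (a ^ (p - 2) * (a ^ 2 - a * b) + b ^ (p - 2) * (b ^ 2 - a * b))
      ≥ (p - 1) * (a ^ 2 + b ^ 2 - 2 * (a * b)) := by
    have hid : a ^ (p - 2) * (a ^ 2 - a * b) + b ^ (p - 2) * (b ^ 2 - a * b)
        = (a ^ (p - 1) - b ^ (p - 1)) * (a - b) := by
      have e1 : a ^ (p - 2) * (a * b) = a ^ (p - 1) * b := by
        rw [show a ^ (p - 2) * (a * b) = (a ^ (p - 2) * a) * b by ring, haQ]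
      have e2 : b ^ (p - 2) * (a * b) = b ^ (p - 1) * a := by
        rw [show b ^ (p - 2) * (a * b) = (b ^ (p - 2) * b) * a by ring, hbQ]
      rw [mul_sub, mul_sub, haP, hbP, e1, e2]; ring
    rcases le_total b a with hba | hab
    · have h := hEm a b ha hb hba
      rw [hid]
      calc (p - 1) * (a ^ 2 + b ^ 2 - 2 * (a * b)) = (p - 1) * (a - b) ^ 2 := by ring
        _ ≤ (a + b) ^ (2 - p) * (a ^ (p - 1) - b ^ (p - 1)) * (a - b) := h
        _ = c ^ (2 - p) * ((a ^ (p - 1) - b ^ (p - 1)) * (a - b)) := by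
            rw [hcdef]; ring
    · have h := hEm b a hb ha hab
      rw [hid]
      calc (p - 1) * (a ^ 2 + b ^ 2 - 2 * (a * b)) = (p - 1) * (b - a) ^ 2 := by ring
        _ ≤ (b + a) ^ (2 - p) * (b ^ (p - 1) - a ^ (p - 1)) * (b - a) := h
        _ = c ^ (2 - p) * ((a ^ (p - 1) - b ^ (p - 1)) * (a - b)) := by
            rw [hcdef, add_comm b a]; ring
  -- affine interpolation in s
  have hab : 0 < a * b := mul_pos ha hb
  exact affine_step hab hs1 hs2 hEp hGab

/-- Strong monotonicity estimate for the shear-thinning power-law operator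
`F₁(λ) = μ₀ |λ|^(p-2) λ` (with `F₁(0) = 0`) on 3×3 matrices, `p ∈ (1,2)`:
`(|λ| + |λ'|)^(2-p) ⟪F₁(λ) - F₁(λ'), λ - λ'⟫ ≥ μ₀ (p-1) |λ - λ'|²`. -/
theorem stmt2 (p μ₀ : ℝ) (hp1 : 1 < p) (hp2 : p < 2) (hμ₀ : 0 < μ₀)
    (F : Matrix (Fin 3) (Fin 3) ℝ → Matrix (Fin 3) (Fin 3) ℝ)
    (hF0 : F 0 = 0)
    (hF : ∀ A : Matrix (Fin 3) (Fin 3) ℝ, A ≠ 0 → F A = (μ₀ * fnorm A ^ (p - 2)) • A) :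
    ∀ A B : Matrix (Fin 3) (Fin 3) ℝ,
      (fnorm A + fnorm B) ^ (2 - p) * finner (F A - F B) (A - B)
        ≥ μ₀ * (p - 1) * fnorm (A - B) ^ 2 := by
  intro A B
  by_cases hA : A = 0
  · by_cases hB : B = 0
    · subst hA; subst hB
      simp [hF0, finner, fnorm]
    · subst hA
      have hb := fnorm_pos hB
      rw [hF B hB, hF0]
      have hnz : fnorm (0 - B) = fnorm B := by
        simp [fnorm, Matrix.sub_apply]
      have h0 : fnorm (0 : Matrix (Fin 3) (Fin 3) ℝ) = 0 := by simp [fnorm]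
      have hin : finner (0 - (μ₀ * fnorm B ^ (p - 2)) • B) (0 - B)
          = μ₀ * fnorm B ^ (p - 2) * fnorm B ^ 2 := by
        rw [zero_sub, zero_sub, finner_neg_neg, finner_smul_left, finner_self]
      rw [hin, hnz, h0, zero_add]
      have hprod : fnorm B ^ (2 - p) * fnorm B ^ (p - 2) = 1 := by
        rw [← Real.rpow_add hb]; norm_num
      have heq : fnorm B ^ (2 - p) * (μ₀ * fnorm B ^ (p - 2) * fnorm B ^ 2)
          = μ₀ * fnorm B ^ 2 := by
        calc fnorm B ^ (2 - p) * (μ₀ * fnorm B ^ (p - 2) * fnorm B ^ 2)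
            = (fnorm B ^ (2 - p) * fnorm B ^ (p - 2)) * (μ₀ * fnorm B ^ 2) := by ring
          _ = μ₀ * fnorm B ^ 2 := by rw [hprod, one_mul]
      rw [ge_iff_le, heq]
      have hX : 0 ≤ μ₀ * fnorm B ^ 2 := by positivity
      nlinarith [mul_nonneg (by linarith : (0:ℝ) ≤ 2 - p) hX]
  · by_cases hB : B = 0
    · subst hB
      have ha := fnorm_pos hA
      rw [hF A hA, hF0]
      have hnz : fnorm (A - 0) = fnorm A := by rw [sub_zero]
      have h0 : fnorm (0 : Matrix (Fin 3) (Fin 3) ℝ) = 0 := by simp [fnorm]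
      have hin : finner ((μ₀ * fnorm A ^ (p - 2)) • A - 0) (A - 0)
          = μ₀ * fnorm A ^ (p - 2) * fnorm A ^ 2 := by
        rw [sub_zero, sub_zero, finner_smul_left, finner_self]
      rw [hin, hnz, h0, add_zero]
      have hprod : fnorm A ^ (2 - p) * fnorm A ^ (p - 2) = 1 := by
        rw [← Real.rpow_add ha]; norm_num
      have heq : fnorm A ^ (2 - p) * (μ₀ * fnorm A ^ (p - 2) * fnorm A ^ 2)
          = μ₀ * fnorm A ^ 2 := by
        calc fnorm A ^ (2 - p) * (μ₀ * fnorm A ^ (p - 2) * fnorm A ^ 2)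
            = (fnorm A ^ (2 - p) * fnorm A ^ (p - 2)) * (μ₀ * fnorm A ^ 2) := by ring
          _ = μ₀ * fnorm A ^ 2 := by rw [hprod, one_mul]
      rw [ge_iff_le, heq]
      have hX : 0 ≤ μ₀ * fnorm A ^ 2 := by positivity
      nlinarith [mul_nonneg (by linarith : (0:ℝ) ≤ 2 - p) hX]
    · -- main case
      have ha := fnorm_pos hA
      have hb := fnorm_pos hB
      rw [hF A hA, hF B hB]
      set a := fnorm A with hadef
      set b := fnorm B with hbdef
      set s := finner A B with hsdef
      have hsum : finner ((μ₀ * a ^ (p - 2)) • A - (μ₀ * b ^ (p - 2)) • B) (A - B)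
          = μ₀ * (a ^ (p - 2) * (a ^ 2 - s) + b ^ (p - 2) * (b ^ 2 - s)) := by
        rw [finner_sub_left, finner_smul_left, finner_smul_left,
          finner_sub_right, finner_sub_right, finner_self, finner_self,
          finner_comm B A, ← hsdef]
        ring
      have hAB2 : fnorm (A - B) ^ 2 = a ^ 2 + b ^ 2 - 2 * s := by
        rw [← finner_self, finner_sub_left, finner_sub_right, finner_sub_right,
          finner_self, finner_self, finner_comm B A, ← hsdef]
        ring
      have habs := abs_finner_le A B
      have hs1 : s ≤ a * b := by
        have := abs_le.1 habs; exact this.2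
      have hs2 : -(a * b) ≤ s := by
        have := abs_le.1 habs; exact this.1
      have hkey := key_scalar hp1 hp2 ha hb hs1 hs2
      rw [hsum, hAB2]
      calc μ₀ * (p - 1) * (a ^ 2 + b ^ 2 - 2 * s)
          ≤ μ₀ * ((a + b) ^ (2 - p) * (a ^ (p - 2) * (a ^ 2 - s) + b ^ (p - 2) * (b ^ 2 - s))) := by
            have := mul_le_mul_of_nonneg_left hkey hμ₀.le
            linarith [this]
        _ = (a + b) ^ (2 - p) * (μ₀ * (a ^ (p - 2) * (a ^ 2 - s) + b ^ (p - 2) * (b ^ 2 - s))) := by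
            ring
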